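/- Let n ≥ 1 and λ > 0. For every p with 1 ≤ p ≤ ∞ and all x, y ∈ ℝⁿ, ‖σ_λ(x) − σ_λ(y)‖_p ≤ (λ/2) ‖x − y‖_p. That is, the softmax function with inverse temperature λ is (λ/2)-Lipschitz with respect to every ℓ_p norm. -/

import Mathlib

open scoped ENNReal BigOperators

/-- The softmax function with inverse temperature `lam`. -/
noncomputable def softmax {n : ℕ} (lam : ℝ) (x : Fin n → ℝ) : Fin n → ℝ :=
  fun i => Real.exp (lam * x i) / ∑ j, Real.exp (lam * x j)

/-- The ℓ_p norm on `Fin n → ℝ`, for `p ∈ [1, ∞]`. -/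
noncomputable def lpNorm {n : ℕ} (p : ℝ≥0∞) (x : Fin n → ℝ) : ℝ :=
  if p = ⊤ then ⨆ i, |x i| else (∑ i, |x i| ^ p.toReal) ^ (1 / p.toReal)

/-- The ℓ_p-induced operator norm of a matrix. -/
noncomputable def opNorm {n m : ℕ} (p : ℝ≥0∞) (A : Matrix (Fin n) (Fin m) ℝ) : ℝ :=
  ⨆ v : {v : Fin m → ℝ // v ≠ 0}, lpNorm p (A.mulVec v.val) / lpNorm p v.val

/-- The matrix `Diag(s) - s sᵀ` (Jacobian of softmax with `lam = 1` at a point with value `s`). -/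
noncomputable def softmaxJac {n : ℕ} (s : Fin n → ℝ) : Matrix (Fin n) (Fin n) ℝ :=
  Matrix.diagonal s - Matrix.vecMulVec s s

/-- The open (interior of the) probability simplex. -/
def openSimplex (n : ℕ) : Set (Fin n → ℝ) :=
  {u | (∀ i, 0 < u i) ∧ ∑ i, u i = 1}

/-- The (closed) probability simplex. -/
def probSimplex (n : ℕ) : Set (Fin n → ℝ) :=
  {u | (∀ i, 0 ≤ u i) ∧ ∑ i, u i = 1}

/-! The derivative of `softmax lam` at `x` is `lam • softmaxJac s` with `s = softmax lam x` in the
probability simplex. The absolute row sums of `softmaxJac s`, which equal its column sums by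
symmetry, are `2 sᵢ (1 - sᵢ) ≤ 1/2`, so by the Schur test (weighted Hölder on each row, then
exchanging the order of summation) its `ℓ_p` operator norm is at most `1/2` for every `p`. The mean
value inequality along the segment from `y` to `x` then gives the bound. -/

open Finset Matrix

theorem rpow_inner_le_weight_mul_Lp {ι : Type*} (s : Finset ι) {r : ℝ} (hr : 1 ≤ r)
    {b f : ι → ℝ} (hb : ∀ i, 0 ≤ b i) (hf : ∀ i, 0 ≤ f i) :
    (∑ i ∈ s, b i * f i) ^ r ≤ (∑ i ∈ s, b i) ^ (r - 1) * ∑ i ∈ s, b i * f i ^ r := by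
  have hB : 0 ≤ ∑ i ∈ s, b i := sum_nonneg fun i _ => hb i
  have hS : 0 ≤ ∑ i ∈ s, b i * f i ^ r :=
    sum_nonneg fun i _ => mul_nonneg (hb i) (Real.rpow_nonneg (hf i) r)
  calc (∑ i ∈ s, b i * f i) ^ r
      ≤ ((∑ i ∈ s, b i) ^ (1 - r⁻¹) * (∑ i ∈ s, b i * f i ^ r) ^ r⁻¹) ^ r := by
        gcongr
        · exact sum_nonneg fun i _ => mul_nonneg (hb i) (hf i)
        · exact Real.inner_le_weight_mul_Lp_of_nonneg s hr b f hb hf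
    _ = (∑ i ∈ s, b i) ^ (r - 1) * ∑ i ∈ s, b i * f i ^ r := by
        have hr0 : r ≠ 0 := by positivity
        rw [Real.mul_rpow (by positivity) (by positivity), ← Real.rpow_mul hB, ← Real.rpow_mul hS,
          sub_mul, inv_mul_cancel₀ hr0, one_mul, Real.rpow_one]

section SchurTest

variable {m n : ℕ} (A : Matrix (Fin m) (Fin n) ℝ) {c : ℝ}

theorem abs_mulVec_le (w : Fin n → ℝ) (i : Fin m) :
    |(A *ᵥ w) i| ≤ ∑ j, |A i j| * |w j| := by
  simp only [mulVec, dotProduct, ← abs_mul]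
  exact abs_sum_le_sum_abs _ _

theorem sum_abs_mulVec_rpow_le (hc : 0 ≤ c) (hrow : ∀ i, ∑ j, |A i j| ≤ c)
    (hcol : ∀ j, ∑ i, |A i j| ≤ c) {r : ℝ} (hr : 1 ≤ r) (w : Fin n → ℝ) :
    ∑ i, |(A *ᵥ w) i| ^ r ≤ c ^ r * ∑ j, |w j| ^ r := by
  calc ∑ i, |(A *ᵥ w) i| ^ r
      ≤ ∑ i, (∑ j, |A i j| * |w j|) ^ r := by gcongr with i; exact abs_mulVec_le A w i
    _ ≤ ∑ i, c ^ (r - 1) * ∑ j, |A i j| * |w j| ^ r := by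
        gcongr with i
        refine (rpow_inner_le_weight_mul_Lp _ hr (b := fun j => |A i j|) (f := fun j => |w j|)
          (fun j => abs_nonneg _) (fun j => abs_nonneg _)).trans ?_
        gcongr
        exact hrow i
    _ = c ^ (r - 1) * ∑ j, (∑ i, |A i j|) * |w j| ^ r := by
        simp only [← mul_sum, sum_mul]
        rw [sum_comm]
    _ ≤ c ^ (r - 1) * ∑ j, c * |w j| ^ r := by gcongr with j; exact hcol j
    _ = c ^ r * ∑ j, |w j| ^ r := by
        rw [← mul_sum, ← mul_assoc, ← Real.rpow_add_one' hc (by linarith), sub_add_cancel]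

theorem iSup_abs_mulVec_le (hc : 0 ≤ c) (hrow : ∀ i, ∑ j, |A i j| ≤ c) (w : Fin n → ℝ) :
    ⨆ i, |(A *ᵥ w) i| ≤ c * ⨆ j, |w j| := by
  have hw : ∀ j, |w j| ≤ ⨆ j, |w j| := le_ciSup (Set.finite_range _).bddAbove
  have hM : 0 ≤ ⨆ j, |w j| := Real.iSup_nonneg fun j => abs_nonneg _
  refine Real.iSup_le (fun i => ?_) (mul_nonneg hc hM)
  calc |(A *ᵥ w) i| ≤ ∑ j, |A i j| * |w j| := abs_mulVec_le A w i
    _ ≤ ∑ j, |A i j| * ⨆ j, |w j| := by gcongr with j; exact hw j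
    _ ≤ c * ⨆ j, |w j| := by rw [← sum_mul]; gcongr; exact hrow i

theorem lpNorm_mulVec_le (hc : 0 ≤ c) (hrow : ∀ i, ∑ j, |A i j| ≤ c)
    (hcol : ∀ j, ∑ i, |A i j| ≤ c) {p : ℝ≥0∞} (hp : 1 ≤ p) (w : Fin n → ℝ) :
    lpNorm p (A *ᵥ w) ≤ c * lpNorm p w := by
  unfold lpNorm
  split_ifs with hp_top
  · exact iSup_abs_mulVec_le A hc hrow w
  have hr : 1 ≤ p.toReal := by
    simpa using ENNReal.toReal_mono hp_top hp
  have hr0 : 0 < p.toReal := by linarith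
  calc (∑ i, |(A *ᵥ w) i| ^ p.toReal) ^ (1 / p.toReal)
      ≤ (c ^ p.toReal * ∑ j, |w j| ^ p.toReal) ^ (1 / p.toReal) := by
        gcongr
        exact sum_abs_mulVec_rpow_le A hc hrow hcol hr w
    _ = c * (∑ j, |w j| ^ p.toReal) ^ (1 / p.toReal) := by
        rw [Real.mul_rpow (by positivity) (by positivity), ← Real.rpow_mul hc,
          mul_one_div_cancel hr0.ne', Real.rpow_one]

end SchurTest

section SoftmaxJacobian

variable {n : ℕ} {s : Fin n → ℝ}

theorem softmaxJac_apply (s : Fin n → ℝ) (i j : Fin n) :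
    softmaxJac s i j = (if i = j then s i else 0) - s i * s j := by
  simp [softmaxJac, diagonal_apply, vecMulVec_apply]

theorem softmaxJac_comm (s : Fin n → ℝ) (i j : Fin n) : softmaxJac s i j = softmaxJac s j i := by
  rcases eq_or_ne i j with rfl | hij
  · rfl
  · simp only [softmaxJac_apply, if_neg hij, if_neg hij.symm, mul_comm]

theorem softmaxJac_mulVec_apply (s w : Fin n → ℝ) (i : Fin n) :
    (softmaxJac s *ᵥ w) i = s i * (w i - ∑ j, s j * w j) := by
  simp only [mulVec, dotProduct, softmaxJac_apply, sub_mul, sum_sub_distrib, ite_mul, zero_mul,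
    sum_ite_eq, mem_univ, if_true, mul_assoc, ← mul_sum]
  ring

theorem sum_abs_softmaxJac (hs : s ∈ probSimplex n) (i : Fin n) :
    ∑ j, |softmaxJac s i j| = 2 * s i * (1 - s i) := by
  obtain ⟨hs_nonneg, hs_sum⟩ := hs
  have hrest : ∑ j ∈ univ.erase i, s j = 1 - s i := by
    rw [← hs_sum, ← add_sum_erase _ _ (mem_univ i), add_sub_cancel_left]
  have hoff : ∀ j ∈ univ.erase i, |softmaxJac s i j| = s i * s j := fun j hj => by
    rw [softmaxJac_apply, if_neg (ne_of_mem_erase hj).symm, zero_sub, abs_neg,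
      abs_of_nonneg (mul_nonneg (hs_nonneg i) (hs_nonneg j))]
  have hdiag : |softmaxJac s i i| = s i * (1 - s i) := by
    have : 0 ≤ 1 - s i := hrest ▸ sum_nonneg fun j _ => hs_nonneg j
    rw [softmaxJac_apply, if_pos rfl, abs_of_nonneg (by nlinarith [hs_nonneg i])]
    ring
  rw [← add_sum_erase _ _ (mem_univ i), sum_congr rfl hoff, ← mul_sum, hrest, hdiag]
  ring

theorem sum_abs_softmaxJac_le (hs : s ∈ probSimplex n) (i : Fin n) :
    ∑ j, |softmaxJac s i j| ≤ 1 / 2 := by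
  rw [sum_abs_softmaxJac hs]
  nlinarith [sq_nonneg (2 * s i - 1)]

theorem lpNorm_softmaxJac_mulVec_le (hs : s ∈ probSimplex n) {p : ℝ≥0∞} (hp : 1 ≤ p)
    (w : Fin n → ℝ) : lpNorm p (softmaxJac s *ᵥ w) ≤ 1 / 2 * lpNorm p w :=
  lpNorm_mulVec_le _ (by norm_num) (sum_abs_softmaxJac_le hs)
    (fun j => by simpa only [softmaxJac_comm s _ j] using sum_abs_softmaxJac_le hs j) hp w

end SoftmaxJacobian

section Softmax

variable {n : ℕ} [Nonempty (Fin n)]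

theorem sum_exp_mul_pos (lam : ℝ) (x : Fin n → ℝ) : 0 < ∑ j, Real.exp (lam * x j) :=
  sum_pos (fun _ _ => Real.exp_pos _) univ_nonempty

theorem softmax_mem_probSimplex (lam : ℝ) (x : Fin n → ℝ) : softmax lam x ∈ probSimplex n :=
  ⟨fun i => (div_pos (Real.exp_pos _) (sum_exp_mul_pos lam x)).le, by
    simp only [softmax]
    rw [← sum_div, div_self (sum_exp_mul_pos lam x).ne']⟩

theorem hasDerivAt_softmax_line (lam : ℝ) (x w : Fin n → ℝ) (t : ℝ) :
    HasDerivAt (fun t => softmax lam (x + t • w))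
      (lam • (softmaxJac (softmax lam (x + t • w)) *ᵥ w)) t := by
  have hexp : ∀ j, HasDerivAt (fun t => Real.exp (lam * (x + t • w) j))
      (lam * (Real.exp (lam * (x + t • w) j) * w j)) t := fun j => by
    simp only [Pi.add_apply, Pi.smul_apply, smul_eq_mul]
    exact (((hasDerivAt_id t).mul_const (w j)).const_add (x j)).const_mul lam |>.exp
      |>.congr_deriv (by simp only [id_eq]; ring)
  have hS := sum_exp_mul_pos lam (x + t • w)
  have hmean : ∑ j, softmax lam (x + t • w) j * w j
      = (∑ j, Real.exp (lam * (x + t • w) j) * w j) / ∑ j, Real.exp (lam * (x + t • w) j) := by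
    simp only [softmax, div_mul_eq_mul_div, sum_div]
  rw [hasDerivAt_pi]
  intro i
  refine ((hexp i).div (HasDerivAt.fun_sum fun j _ => hexp j) hS.ne').congr_deriv ?_
  rw [Pi.smul_apply, smul_eq_mul, softmaxJac_mulVec_apply, hmean, ← mul_sum]
  simp only [softmax]
  field_simp

end Softmax

section LpNorm

variable {n : ℕ} {p : ℝ≥0∞}

theorem lpNorm_eq_norm_toLp [Fact (1 ≤ p)] (v : Fin n → ℝ) : lpNorm p v = ‖WithLp.toLp p v‖ := by
  unfold lpNorm
  split_ifs with hp_top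
  · subst hp_top
    simp [PiLp.norm_eq_ciSup]
  · have hp0 : 0 < p.toReal := ENNReal.toReal_pos (zero_lt_one.trans_le Fact.out).ne' hp_top
    simp [PiLp.norm_eq_sum hp0]

theorem lpNorm_smul (hp : 1 ≤ p) (c : ℝ) (v : Fin n → ℝ) : lpNorm p (c • v) = |c| * lpNorm p v := by
  have : Fact (1 ≤ p) := ⟨hp⟩
  rw [lpNorm_eq_norm_toLp, lpNorm_eq_norm_toLp, WithLp.toLp_smul, norm_smul, Real.norm_eq_abs]

theorem lpNorm_sub_le_of_hasDerivAt (hp : 1 ≤ p) {γ γ' : ℝ → Fin n → ℝ} {C : ℝ}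
    (hγ : ∀ t ∈ Set.Icc (0 : ℝ) 1, HasDerivAt γ (γ' t) t)
    (hbound : ∀ t ∈ Set.Ico (0 : ℝ) 1, lpNorm p (γ' t) ≤ C) :
    lpNorm p (γ 1 - γ 0) ≤ C := by
  have : Fact (1 ≤ p) := ⟨hp⟩
  let L := (PiLp.continuousLinearEquiv p ℝ fun _ : Fin n => ℝ).symm
  simp only [lpNorm_eq_norm_toLp] at hbound ⊢
  exact norm_image_sub_le_of_norm_deriv_le_segment_01' (f := fun t => L (γ t))
    (fun t ht => (L.hasFDerivAt.comp_hasDerivAt t (hγ t ht)).hasDerivWithinAt) hbound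

end LpNorm

/-- softmax with inverse temperature lam is (lam/2)-Lipschitz in every ℓ_p norm. -/
theorem softmax_lipschitz_lp {n : ℕ} (hn : 1 ≤ n) (lam : ℝ) (hlam : 0 < lam)
    (p : ℝ≥0∞) (hp : 1 ≤ p) (x y : Fin n → ℝ) :
    lpNorm p (softmax lam x - softmax lam y) ≤ (lam / 2) * lpNorm p (x - y) := by
  have : Nonempty (Fin n) := Fin.pos_iff_nonempty.mp hn
  have hJac (t : ℝ) : lpNorm p (lam • (softmaxJac (softmax lam (y + t • (x - y))) *ᵥ (x - y)))
      ≤ lam / 2 * lpNorm p (x - y) := by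
    rw [lpNorm_smul hp, abs_of_pos hlam]
    calc lam * lpNorm p (softmaxJac (softmax lam (y + t • (x - y))) *ᵥ (x - y))
        ≤ lam * (1 / 2 * lpNorm p (x - y)) := by
          gcongr
          exact lpNorm_softmaxJac_mulVec_le (softmax_mem_probSimplex lam _) hp _
      _ = lam / 2 * lpNorm p (x - y) := by ring
  simpa using lpNorm_sub_le_of_hasDerivAt hp
    (fun t _ => hasDerivAt_softmax_line lam y (x - y) t) (fun t _ => hJac t)
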